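/- arXiv:2004.00828 — 6 statements merged into one kernel-verified Lean document; each statement's English description precedes it below -/
import Mathlib

section
/- A kinematic system ℱ : V → 𝔛(G) is equivariant (i.e. admits a right group action ψ on V with dR_A ℱ_v(X) = ℱ_{ψ_A(v)}(X A) for all A, X ∈ G, v ∈ V) if and only if the vector subspace image(ℱ) ⊆ 𝔛(G) is invariant under the group action d⋆R, assuming ℱ is linear and injective. -/
/-- a kinematic system `ℱ : V → 𝔛(G)` (linear, injective) is
equivariant — i.e. admits a right group action `ψ` on `V` with
`dR_A ℱ_v(X) = ℱ_{ψ_A(v)}(X A)` — if and only if the subspace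
`image ℱ ⊆ 𝔛(G)` is invariant under the group action `d⋆R`. -/
theorem equivariant_iff_image_invariant
    {k G M V : Type*} [Field k] [Group G] [AddCommGroup M] [Module k M]
    [AddCommGroup V] [Module k V]
    (ρ : G → (M →ₗ[k] M))
    (hρ_one : ρ 1 = LinearMap.id)
    (hρ_mul : ∀ A B : G, ρ (B * A) = (ρ A).comp (ρ B))
    (dstarR : G → (G → M) → (G → M))
    (hd : ∀ (Z : G) (F : G → M) (X : G), dstarR Z F X = ρ Z (F (X * Z⁻¹)))
    (ℱ : V →ₗ[k] (G → M)) (hinj : Function.Injective ℱ) :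
    (∃ ψ : G → V → V,
      (∀ v : V, ψ 1 v = v) ∧
      (∀ (A B : G) (v : V), ψ A (ψ B v) = ψ (B * A) v) ∧
      (∀ (A : G) (v : V) (X : G), ρ A (ℱ v X) = ℱ (ψ A v) (X * A))) ↔
    (∀ (A : G) (f : G → M), f ∈ Set.range ℱ → dstarR A f ∈ Set.range ℱ) := by
  constructor
  · rintro ⟨ψ, -, -, hψ⟩ A f ⟨v, rfl⟩
    refine ⟨ψ A v, ?_⟩
    funext X
    rw [hd, hψ A v (X * A⁻¹), inv_mul_cancel_right]
  · intro hinv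
    choose w hw using fun (A : G) (v : V) => hinv A (ℱ v) ⟨v, rfl⟩
    -- hw : ℱ (w A v) = dstarR A (ℱ v)
    have key : ∀ (A : G) (v : V), ℱ (w A v) = dstarR A (ℱ v) := fun A v => hw A v
    refine ⟨fun A v => w A v, ?_, ?_, ?_⟩
    · intro v
      apply hinj
      funext X
      rw [key, hd, hρ_one]
      simp
    · intro A B v
      apply hinj
      funext X
      rw [key, key, key, hd, hd, hd, hρ_mul]
      simp [mul_assoc]
    · intro A v X
      rw [key, hd]
      simp
end

section
/- Let ℱ : V → 𝔛(G) be an equivariant kinematic system on a matrix Lie group G with input action ψ. Then ℱ is left invariant if and only if Ad_{A⁻¹} ℱ_v(I) = ℱ_{ψ_A(v)}(I) for all A ∈ G and v ∈ V. -/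
/-- an equivariant kinematic system `ℱ` on a matrix Lie group `G`
(embedded via `φ : G →* A`, right input action `ψ`, equivariance
`dR_A ℱ_v(X) = ℱ_{ψ_A(v)}(X A)`) is left invariant (`ℱ_v(X) = X ℱ_v(I)`) if and
only if `Ad_{A⁻¹} ℱ_v(I) = ℱ_{ψ_A(v)}(I)` for all `A ∈ G`, `v ∈ V`. -/
theorem left_invariant_iff_Ad_psi
    {A G V : Type*} [Ring A] [Algebra ℝ A] [Group G]
    [AddCommGroup V] [Module ℝ V]
    (φ : G →* A) (ℱ : V →ₗ[ℝ] (G → A))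
    (ψ : G → V → V)
    (hψ_one : ∀ v : V, ψ 1 v = v)
    (hψ_mul : ∀ (B C : G) (v : V), ψ B (ψ C v) = ψ (C * B) v)
    (heq : ∀ (B : G) (v : V) (X : G), ℱ v X * φ B = ℱ (ψ B v) (X * B)) :
    (∀ (v : V) (X : G), ℱ v X = φ X * ℱ v 1) ↔
    (∀ (B : G) (v : V), φ B⁻¹ * ℱ v 1 * φ B = ℱ (ψ B v) 1) := by
  constructor
  · intro h B v
    have h1 := heq B v B⁻¹
    rw [inv_mul_cancel] at h1
    rw [← h1, h v B⁻¹]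
  · intro h v X
    have h1 := heq X⁻¹ v X
    rw [mul_inv_cancel] at h1
    have h2 := h X⁻¹ v
    rw [inv_inv] at h2
    calc ℱ v X = ℱ v X * 1 := by rw [mul_one]
    _ = ℱ v X * (φ X⁻¹ * φ X) := by rw [← map_mul, inv_mul_cancel, map_one]
    _ = (ℱ v X * φ X⁻¹) * φ X := by rw [mul_assoc]
    _ = ℱ (ψ X⁻¹ v) 1 * φ X := by rw [h1]
    _ = (φ X * ℱ v 1 * φ X⁻¹) * φ X := by rw [h2]
    _ = φ X * ℱ v 1 := by rw [mul_assoc, ← map_mul, inv_mul_cancel, map_one, mul_one]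
end

section
/- If a kinematic system ℱ : V → 𝔛(G) on a matrix Lie group G is invariant (image(ℱ) ⊆ 𝔏(G) + ℜ(G)), then it is group affine: ℱ_v(AB) = ℱ_v(A) B + A ℱ_v(B) − A ℱ_v(I) B for all A, B ∈ G and v ∈ V. -/
/-- an invariant kinematic system `ℱ` on a matrix Lie group `G`
(embedded via `φ : G →* A`; invariance: every `ℱ_v` is a sum of a left invariant
field `X ↦ X L` and a right invariant field `X ↦ L' X` with `L, L' ∈ 𝔤`) is group
affine: `ℱ_v(AB) = ℱ_v(A) B + A ℱ_v(B) − A ℱ_v(I) B` for all `A, B ∈ G`, `v ∈ V`. -/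
theorem invariant_implies_group_affine
    {A G V : Type*} [Ring A] [Algebra ℝ A] [Group G]
    [AddCommGroup V] [Module ℝ V]
    (φ : G →* A) (𝔤 : Submodule ℝ A) (ℱ : V →ₗ[ℝ] (G → A))
    (hinv : ∀ v : V, ∃ L ∈ 𝔤, ∃ L' ∈ 𝔤, ∀ X : G, ℱ v X = φ X * L + L' * φ X) :
    ∀ (v : V) (B C : G),
      ℱ v (B * C) = ℱ v B * φ C + φ B * ℱ v C - φ B * ℱ v 1 * φ C := by
  intro v B C
  obtain ⟨L, -, L', -, h⟩ := hinv v
  simp only [h, map_mul, map_one]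
  noncomm_ring
end

section
/- Let F : V̊ → 𝔛(G) be a group affine kinematic system on a matrix Lie group G with equivariant input extension ℱ : V ↪ 𝔛(G) (V = span{(d⋆R)(A, F_v)}) and lift Λ(X, v) = X⁻¹ ℱ_v(X) and input action ψ. Then for all A, B ∈ G and v ∈ V̊ the element w := ψ_{B⁻¹}(v) − v ∈ V satisfies Λ(A, w) = Λ(I, w) for all A ∈ G; i.e. ℱ_w is a left invariant vector field. -/
/-- let `F : V̊ → 𝔛(G)` be a group affine kinematic system on a
matrix Lie group `G` (embedded via `φ : G →* A`). In the equivariant input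
extension `V = span {(d⋆R)(C, F_u)}` with inclusion system `ℱ` and input action
`ψ` given by `ℱ_{ψ_C(u)} = (d⋆R)(C, ℱ_u)`, `(d⋆R)(C, F)(X) = F(X C⁻¹) C`, the
element `w := ψ_{B⁻¹}(v) − v = (X ↦ F_v(X B) B⁻¹ − F_v(X)) ∈ V` satisfies
`Λ(X, w) = Λ(I, w)` for all `X ∈ G`, where `Λ(X, w) = X⁻¹ w(X)` is the lift;
i.e. `ℱ_w` is a left invariant vector field. -/
theorem group_affine_difference_left_invariant
    {A G V₀ : Type*} [Ring A] [Algebra ℝ A] [Group G]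
    [AddCommGroup V₀] [Module ℝ V₀]
    (φ : G →* A) (F : V₀ →ₗ[ℝ] (G → A)) (hinj : Function.Injective F)
    (hGA : ∀ (v : V₀) (B C : G),
      F v (B * C) = F v B * φ C + φ B * F v C - φ B * F v 1 * φ C) :
    ∀ (B : G) (v : V₀),
      ((fun X : G => F v (X * B) * φ B⁻¹ - F v X) ∈
        Submodule.span ℝ
          {g : G → A | ∃ (C : G) (u : V₀), g = fun X => F u (X * C⁻¹) * φ C}) ∧
      (∀ X : G, φ X⁻¹ * (F v (X * B) * φ B⁻¹ - F v X) = F v B * φ B⁻¹ - F v 1) := by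
  intro B v
  constructor
  · have h1 : (fun X : G => F v (X * B) * φ B⁻¹) ∈
        Submodule.span ℝ
          {g : G → A | ∃ (C : G) (u : V₀), g = fun X => F u (X * C⁻¹) * φ C} := by
      apply Submodule.subset_span
      exact ⟨B⁻¹, v, by simp⟩
    have h2 : (fun X : G => F v X) ∈
        Submodule.span ℝ
          {g : G → A | ∃ (C : G) (u : V₀), g = fun X => F u (X * C⁻¹) * φ C} := by
      apply Submodule.subset_span
      exact ⟨1, v, by simp⟩
    exact Submodule.sub_mem _ h1 h2
  · intro X
    have hinv : φ X⁻¹ * φ X = 1 := by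
      rw [← map_mul]; simp
    have hBinv : φ B * φ B⁻¹ = 1 := by
      rw [← map_mul]; simp
    rw [hGA v X B]
    have : (F v X * φ B + φ X * F v B - φ X * F v 1 * φ B) * φ B⁻¹ - F v X =
        φ X * (F v B * φ B⁻¹ - F v 1) := by
      rw [sub_mul, add_mul, mul_assoc (F v X), hBinv, mul_one,
        mul_assoc (φ X * F v 1), hBinv, mul_one, mul_sub, mul_assoc]
      abel
    rw [this, ← mul_assoc, hinv, one_mul]
end

section
/- Let F : V̊ → 𝔛(G) be a group affine kinematic system on a matrix Lie group G and let ℱ : V ↪ 𝔛(G) be its equivariant input extension. Then there exists a subspace V^I_⊥ ⊆ V of dimension at most dim G consisting of left invariant vector fields (Type I: Λ(X, w) = Λ(I, w) for all X) such that V = V̊ ⊕ V^I_⊥ (identifying V̊ with image F ⊆ V), and the extended system ℱ : V → 𝔛(G) is group affine. -/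
/-- The linear map sending `L ∈ A` to the left invariant vector field `X ↦ X L`;
its range is the space `𝔏(G)` of left invariant vector fields, of dimension
`dim G`. -/
noncomputable def Lmap {A G : Type*} [Ring A] [Algebra ℝ A] [Group G] (φ : G →* A) :
    A →ₗ[ℝ] (G → A) where
  toFun L := fun X => φ X * L
  map_add' a b := by funext X; simp [mul_add]
  map_smul' r a := by funext X; simp [mul_smul_comm]

section Aux

variable {A G V₀ : Type*} [Ring A] [Algebra ℝ A] [Group G]
    [AddCommGroup V₀] [Module ℝ V₀]

/-- decomposition of a generator -/
theorem gen_decomp (φ : G →* A) (F : V₀ →ₗ[ℝ] (G → A))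
    (hGA : ∀ (v : V₀) (B C : G),
      F v (B * C) = F v B * φ C + φ B * F v C - φ B * F v 1 * φ C)
    (u : V₀) (C : G) :
    (fun X => F u (X * C⁻¹) * φ C)
      = F u + Lmap φ (F u C⁻¹ * φ C - F u 1) := by
  funext X
  have h := hGA u X C⁻¹
  have hc : (φ C⁻¹ : A) * φ C = 1 := by
    rw [← φ.map_mul, inv_mul_cancel, φ.map_one]
  simp only [Pi.add_apply, Lmap, LinearMap.coe_mk, AddHom.coe_mk]
  rw [h]
  rw [sub_mul, add_mul, mul_assoc (F u X), hc, mul_one,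
    mul_assoc (φ X * F u 1), hc, mul_one, mul_sub, ← mul_assoc]
  abel

end Aux

/-- let `F : V̊ → 𝔛(G)` be a group affine kinematic system on a
matrix Lie group `G` (embedded via `φ : G →* A`, `A` finite dimensional) and let
`ℱ : V ↪ 𝔛(G)` be its equivariant input extension,
`V = span {(d⋆R)(C, F_u) | C ∈ G, u ∈ V̊}` with `(d⋆R)(C, F)(X) = F(X C⁻¹) C`.
Then there exists a subspace `V^I_⊥ ⊆ V` of dimension at most `dim G`
(= the dimension of the space of left invariant vector fields), consisting of
left invariant (Type I: `Λ(X, w) = Λ(I, w)`, i.e. `w(X) = X w(I)`) vector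
fields, such that `V = V̊ ⊕ V^I_⊥` (identifying `V̊` with `image F`), and the
extended system is group affine. -/
theorem group_affine_extension
    {A G V₀ : Type*} [Ring A] [Algebra ℝ A] [Group G] [FiniteDimensional ℝ A]
    [AddCommGroup V₀] [Module ℝ V₀]
    (φ : G →* A) (F : V₀ →ₗ[ℝ] (G → A)) (hinj : Function.Injective F)
    (hGA : ∀ (v : V₀) (B C : G),
      F v (B * C) = F v B * φ C + φ B * F v C - φ B * F v 1 * φ C)
    (Vext : Submodule ℝ (G → A))
    (hVext : Vext = Submodule.span ℝ
      {g : G → A | ∃ (C : G) (u : V₀), g = fun X => F u (X * C⁻¹) * φ C}) :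
    ∃ VI : Submodule ℝ (G → A),
      VI ≤ Vext ∧
      Module.finrank ℝ VI ≤ Module.finrank ℝ (LinearMap.range (Lmap φ)) ∧
      (∀ f ∈ VI, ∀ X : G, f X = φ X * f 1) ∧
      Disjoint (LinearMap.range F) VI ∧
      LinearMap.range F ⊔ VI = Vext ∧
      (∀ f ∈ Vext, ∀ B C : G,
        f (B * C) = f B * φ C + φ B * f C - φ B * f 1 * φ C) := by
  classical
  -- range F ≤ Vext
  have hFle : LinearMap.range F ≤ Vext := by
    rintro _ ⟨u, rfl⟩
    rw [hVext]
    apply Submodule.subset_span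
    exact ⟨1, u, by funext X; simp⟩
  -- W : left invariant part of Vext
  set W : Submodule ℝ (G → A) := Vext ⊓ LinearMap.range (Lmap φ) with hW
  -- Vext = range F ⊔ W
  have hsup : LinearMap.range F ⊔ W = Vext := by
    apply le_antisymm (sup_le hFle inf_le_left)
    rw [hVext]
    rw [Submodule.span_le]
    rintro _ ⟨C, u, rfl⟩
    rw [gen_decomp φ F hGA u C]
    apply Submodule.add_mem
    · exact Submodule.mem_sup_left ⟨u, rfl⟩
    · apply Submodule.mem_sup_right
      refine ⟨?_, ⟨_, rfl⟩⟩
      have : Lmap φ (F u C⁻¹ * φ C - F u 1)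
          = (fun X => F u (X * C⁻¹) * φ C) - F u := by
        rw [gen_decomp φ F hGA u C]; abel
      rw [this]
      apply Submodule.sub_mem
      · exact Submodule.subset_span ⟨C, u, rfl⟩
      · rw [← hVext]; exact hFle ⟨u, rfl⟩
  -- complement inside W
  obtain ⟨q, hq⟩ := Submodule.exists_isCompl
    (Submodule.comap W.subtype (LinearMap.range F))
  refine ⟨q.map W.subtype, ?_, ?_, ?_, ?_, ?_, ?_⟩
  · exact le_trans (Submodule.map_subtype_le W q) inf_le_left
  · -- finrank bound
    have hle : q.map W.subtype ≤ LinearMap.range (Lmap φ) :=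
      le_trans (Submodule.map_subtype_le W q) inf_le_right
    haveI : FiniteDimensional ℝ (LinearMap.range (Lmap φ)) :=
      LinearMap.finiteDimensional_range (Lmap φ)
    exact Submodule.finrank_mono hle
  · -- left invariance
    intro f hf X
    have hfr : f ∈ LinearMap.range (Lmap φ) :=
      (le_trans (Submodule.map_subtype_le W q) inf_le_right) hf
    obtain ⟨L, rfl⟩ := hfr
    simp [Lmap]
  · -- disjointness
    rw [disjoint_iff]
    ext f
    simp only [Submodule.mem_inf, Submodule.mem_bot]
    constructor
    · rintro ⟨hF, hq'⟩
      obtain ⟨w, hwq, rfl⟩ := hq'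
      have : w ∈ Submodule.comap W.subtype (LinearMap.range F) := hF
      have : w ∈ Submodule.comap W.subtype (LinearMap.range F) ⊓ q := ⟨this, hwq⟩
      rw [hq.inf_eq_bot] at this
      simpa using this
    · rintro rfl; exact ⟨Submodule.zero_mem _, Submodule.zero_mem _⟩
  · -- sup
    apply le_antisymm
    · exact sup_le hFle (le_trans (Submodule.map_subtype_le W q) inf_le_left)
    · rw [← hsup]
      apply sup_le le_sup_left
      intro w hw
      have : (⟨w, hw⟩ : W) ∈ Submodule.comap W.subtype (LinearMap.range F) ⊔ q := by
        rw [hq.sup_eq_top]; trivial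
      obtain ⟨a, ha, b, hb, hab⟩ := Submodule.mem_sup.mp this
      have hw' : w = (a : G → A) + (b : G → A) := by
        have := congrArg (Subtype.val) hab
        simpa using this.symm
      rw [hw']
      exact Submodule.add_mem _ (Submodule.mem_sup_left ha)
        (Submodule.mem_sup_right ⟨b, hb, rfl⟩)
  · -- group affine
    intro f hf B C
    rw [hVext] at hf
    induction hf using Submodule.span_induction with
    | mem g hg =>
      obtain ⟨C₀, u, rfl⟩ := hg
      rw [gen_decomp φ F hGA u C₀]
      set L := F u C₀⁻¹ * φ C₀ - F u 1 with hL
      simp only [Pi.add_apply, Lmap, LinearMap.coe_mk, AddHom.coe_mk, map_mul, map_one, one_mul]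
      rw [hGA u B C]
      simp only [map_mul, map_one, one_mul, add_mul, mul_add, sub_mul, mul_sub]
      noncomm_ring
    | zero => simp
    | add g h _ _ hg hh =>
      simp only [Pi.add_apply, hg, hh, add_mul, mul_add]; abel
    | smul r g _ hg =>
      simp only [Pi.smul_apply, hg, smul_sub, smul_add, mul_smul_comm, smul_mul_assoc]
end

section
/- Let ℱ : V → 𝔛(G) be an equivariant kinematic system on a matrix Lie group G that is group affine. Then the lift Λ(X, v) = X⁻¹ ℱ_v(X) satisfies Λ(A, ψ_{B⁻¹}(v)) − Λ(I, ψ_{B⁻¹}(v)) = Λ(A, v) − Λ(I, v) for all A, B ∈ G and v ∈ V. Consequently, the error dynamics term Λ(E, ψ_{X̂⁻¹}(v)) − Λ(I, ψ_{X̂⁻¹}(v)) equals Λ(E, v) − Λ(I, v), independent of the observer state X̂. -/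
/-- for an equivariant, group affine kinematic system `ℱ` on a
matrix Lie group `G` (embedded via `φ : G →* A`, right input action `ψ` with
equivariance `dR_B ℱ_v(X) = ℱ_{ψ_B(v)}(X B)`), the lift `Λ(X, v) = X⁻¹ ℱ_v(X)`
satisfies `Λ(E, ψ_{B⁻¹}(v)) − Λ(I, ψ_{B⁻¹}(v)) = Λ(E, v) − Λ(I, v)` for all
`E, B ∈ G`, `v ∈ V`; consequently the error dynamics term is independent of the
observer state `X̂ = B`. -/
theorem group_affine_error_dynamics_state_independent
    {A G V : Type*} [Ring A] [Algebra ℝ A] [Group G]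
    [AddCommGroup V] [Module ℝ V]
    (φ : G →* A) (ℱ : V →ₗ[ℝ] (G → A))
    (ψ : G → V → V)
    (hψ_one : ∀ v : V, ψ 1 v = v)
    (hψ_mul : ∀ (B C : G) (v : V), ψ B (ψ C v) = ψ (C * B) v)
    (heq : ∀ (B : G) (v : V) (X : G), ℱ v X * φ B = ℱ (ψ B v) (X * B))
    (hGA : ∀ (v : V) (B C : G),
      ℱ v (B * C) = ℱ v B * φ C + φ B * ℱ v C - φ B * ℱ v 1 * φ C) :
    ∀ (E B : G) (v : V),
      φ E⁻¹ * ℱ (ψ B⁻¹ v) E - ℱ (ψ B⁻¹ v) 1 = φ E⁻¹ * ℱ v E - ℱ v 1 := by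
  intro E B v
  have hE : ℱ (ψ B⁻¹ v) E = ℱ v (E * B) * φ B⁻¹ := by
    have h := heq B⁻¹ v (E * B)
    rw [mul_inv_cancel_right] at h
    exact h.symm
  have h1 : ℱ (ψ B⁻¹ v) 1 = ℱ v B * φ B⁻¹ := by
    have h := heq B⁻¹ v B
    rw [mul_inv_cancel] at h
    exact h.symm
  have hB : φ B * φ B⁻¹ = 1 := by rw [← map_mul, mul_inv_cancel, map_one]
  have hE' : φ E⁻¹ * φ E = 1 := by rw [← map_mul, inv_mul_cancel, map_one]
  rw [hE, h1, hGA v E B]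
  have hE2 : ∀ x : A, φ E⁻¹ * (φ E * x) = x := fun x => by
    rw [← mul_assoc, hE', one_mul]
  simp only [mul_add, add_mul, sub_mul, mul_sub, mul_assoc, hB, mul_one, hE2]
  abel
end
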